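/- Let f : ℝ → ℝ be C¹ with |f(x) - f(y)| ≤ L_f·(1 + |x|^r + |y|^r)·|x - y| and |f'(x) - f'(y)| ≤ L'_f·(1 + |x|^r + |y|^r)·|x - y| for all x, y, for some r > 0. Then for any x₁, x₂, x₃, x₄ ∈ ℝ there exists ξ in the convex hull of {x₁, x₂, x₃, x₄} such that f(x₁) - f(x₂) - f(x₃) + f(x₄) = (x₁ - x₂ - x₃ + x₄)·f'(ξ) + R, where |R| ≤ (L'_f/2)·(1 + |x₁|^r + |x₂|^r + |x₃|^r + |x₄|^r)·(|x₁ - x₂| + |x₃ - x₄|)·(|x₁ - x₃| + |x₂ - x₄|) and |f'(ξ)| ≤ L_f·(1 + |x₁|^r + |x₂|^r + |x₃|^r + |x₄|^r). -/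

import Mathlib

/-!
The mean value theorem applied to `t ↦ f (lineMap x₁ x₂ t) - f (lineMap x₃ x₄ t)` writes the
second difference as `(x₁ - x₂) f'(A) - (x₃ - x₄) f'(B)` with `A ∈ [x₁, x₂]`, `B ∈ [x₃, x₄]` and
`|A - B| ≤ |x₁ - x₃| + |x₂ - x₄|`. Splitting this symmetrically as
`(x₁ - x₂ - x₃ + x₄) (f'(A) + f'(B)) / 2 + (x₁ - x₂ + x₃ - x₄) (f'(A) - f'(B)) / 2`,
the intermediate value theorem realises the average `(f'(A) + f'(B)) / 2` as `f'(ξ)` for some `ξ`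
between `A` and `B`, and the growth bound on `f'` controls the second term. Taking the average,
rather than `f'(A)` or `f'(B)` alone, is what bounds `|f'(ξ)|` by
`L_f (1 + |A|^r + |B|^r)` instead of `L_f (1 + 2|A|^r)`.
-/

open Real Set AffineMap

def PolyLipschitzWith (L r : ℝ) (g : ℝ → ℝ) : Prop :=
  ∀ x y : ℝ, |g x - g y| ≤ L * (1 + |x| ^ r + |y| ^ r) * |x - y|

theorem abs_le_max_abs_abs_of_mem_uIcc {a b z : ℝ} (hz : z ∈ uIcc a b) : |z| ≤ max |a| |b| := by
  rcases le_total a b with hab | hab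
  · rw [uIcc_of_le hab] at hz
    exact abs_le_max_abs_abs hz.1 hz.2
  · rw [uIcc_of_ge hab] at hz
    exact max_comm |a| |b| ▸ abs_le_max_abs_abs hz.1 hz.2

theorem abs_rpow_le_add_of_mem_uIcc {a b z r : ℝ} (hr : 0 ≤ r) (hz : z ∈ uIcc a b) :
    |z| ^ r ≤ |a| ^ r + |b| ^ r := by
  calc |z| ^ r ≤ (max |a| |b|) ^ r :=
        rpow_le_rpow (abs_nonneg z) (abs_le_max_abs_abs_of_mem_uIcc hz) hr
    _ = max (|a| ^ r) (|b| ^ r) := rpow_max (abs_nonneg a) (abs_nonneg b) hr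
    _ ≤ |a| ^ r + |b| ^ r := max_le_add_of_nonneg (by positivity) (by positivity)

theorem lineMap_mem_uIcc (a b : ℝ) {t : ℝ} (ht : t ∈ Icc 0 1) : lineMap a b t ∈ uIcc a b :=
  segment_eq_uIcc a b ▸ lineMap_mem_segment ℝ a b ht

theorem abs_lineMap_sub_lineMap_le (a b c d : ℝ) {t : ℝ} (ht : t ∈ Icc 0 1) :
    |lineMap a b t - lineMap c d t| ≤ |a - c| + |b - d| := by
  have h : lineMap a b t - lineMap c d t = lineMap (a - c) (b - d) t := by
    simp only [lineMap_apply_ring]; ring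
  rw [h]
  exact (abs_le_max_abs_abs_of_mem_uIcc (lineMap_mem_uIcc _ _ ht)).trans
    (max_le_add_of_nonneg (abs_nonneg _) (abs_nonneg _))

theorem exists_sub_sub_add_eq_deriv_lineMap {f : ℝ → ℝ} (hf : Differentiable ℝ f)
    (x₁ x₂ x₃ x₄ : ℝ) : ∃ t ∈ Ioo (0 : ℝ) 1, f x₁ - f x₂ - f x₃ + f x₄ =
      (x₁ - x₂) * deriv f (lineMap x₁ x₂ t) - (x₃ - x₄) * deriv f (lineMap x₃ x₄ t) := by
  have hg : ∀ t, HasDerivAt (fun t ↦ f (lineMap x₁ x₂ t) - f (lineMap x₃ x₄ t))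
      (deriv f (lineMap x₁ x₂ t) * (x₂ - x₁) - deriv f (lineMap x₃ x₄ t) * (x₄ - x₃)) t :=
    fun t ↦ ((hf _).hasDerivAt.comp t (hasDerivAt_lineMap (𝕜 := ℝ))).sub
      ((hf _).hasDerivAt.comp t (hasDerivAt_lineMap (𝕜 := ℝ)))
  obtain ⟨t, ht, hslope⟩ := exists_hasDerivAt_eq_slope _ _ zero_lt_one
    (fun t _ ↦ (hg t).continuousAt.continuousWithinAt) (fun t _ ↦ hg t)
  refine ⟨t, ht, ?_⟩
  simp only [lineMap_apply_zero, lineMap_apply_one, sub_zero, div_one] at hslope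
  linear_combination hslope

theorem exists_mem_uIcc_eq_add_div_two {g : ℝ → ℝ} (hg : Continuous g) (a b : ℝ) :
    ∃ ξ ∈ uIcc a b, g ξ = (g a + g b) / 2 := by
  refine intermediate_value_uIcc hg.continuousOn ?_
  rcases le_total (g a) (g b) with h | h
  · exact mem_uIcc_of_le (by linarith) (by linarith)
  · exact mem_uIcc_of_ge (by linarith) (by linarith)

theorem abs_deriv_le_of_abs_sub_le {f C : ℝ → ℝ} {x : ℝ} (hf : DifferentiableAt ℝ f x)
    (hC : ContinuousAt C x) (h : ∀ y, |f y - f x| ≤ C y * |y - x|) : |deriv f x| ≤ C x := by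
  refine le_of_tendsto_of_tendsto (hasDerivAt_iff_tendsto_slope.mp hf.hasDerivAt).abs
    (hC.tendsto.mono_left nhdsWithin_le_nhds) ?_
  filter_upwards [self_mem_nhdsWithin] with y hy
  rw [slope_def_field, abs_div, div_le_iff₀ (abs_pos.2 (sub_ne_zero.2 hy))]
  exact h y

namespace PolyLipschitzWith

variable {L r : ℝ} {g : ℝ → ℝ}

theorem nonneg (h : PolyLipschitzWith L r g) : 0 ≤ L := by
  have h10 := h 1 0
  rw [sub_zero, abs_one, mul_one] at h10
  exact nonneg_of_mul_nonneg_left ((abs_nonneg _).trans h10) (by positivity)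

theorem abs_deriv_le (h : PolyLipschitzWith L r g) (hr : 0 ≤ r) {x : ℝ}
    (hg : DifferentiableAt ℝ g x) : |deriv g x| ≤ L * (1 + |x| ^ r + |x| ^ r) := by
  refine abs_deriv_le_of_abs_sub_le (C := fun y ↦ L * (1 + |x| ^ r + |y| ^ r)) hg ?_ fun y ↦ ?_
  · exact continuousAt_const.mul (continuousAt_const.add
      ((continuousAt_rpow_const _ _ (Or.inr hr)).comp continuous_abs.continuousAt))
  · simpa only [add_right_comm] using h y x

theorem abs_sub_lineMap_le (h : PolyLipschitzWith L r g) (hr : 0 ≤ r) (x₁ x₂ x₃ x₄ : ℝ) {t : ℝ}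
    (ht : t ∈ Icc 0 1) : |g (lineMap x₁ x₂ t) - g (lineMap x₃ x₄ t)| ≤
      L * (1 + |x₁| ^ r + |x₂| ^ r + |x₃| ^ r + |x₄| ^ r) * (|x₁ - x₃| + |x₂ - x₄|) := by
  have hA := abs_rpow_le_add_of_mem_uIcc hr (lineMap_mem_uIcc x₁ x₂ ht)
  have hB := abs_rpow_le_add_of_mem_uIcc hr (lineMap_mem_uIcc x₃ x₄ ht)
  calc _ ≤ L * (1 + |lineMap x₁ x₂ t| ^ r + |lineMap x₃ x₄ t| ^ r) *
        |lineMap x₁ x₂ t - lineMap x₃ x₄ t| := h _ _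
    _ ≤ _ := by
      have := h.nonneg
      gcongr L * ?_ * ?_
      · linarith
      · exact abs_lineMap_sub_lineMap_le x₁ x₂ x₃ x₄ ht

theorem abs_add_div_two_deriv_le (h : PolyLipschitzWith L r g) (hr : 0 ≤ r)
    (hg : Differentiable ℝ g) {x₁ x₂ x₃ x₄ A B : ℝ} (hA : A ∈ uIcc x₁ x₂) (hB : B ∈ uIcc x₃ x₄) :
    |(deriv g A + deriv g B) / 2| ≤ L * (1 + |x₁| ^ r + |x₂| ^ r + |x₃| ^ r + |x₄| ^ r) := by
  have hdA := h.abs_deriv_le hr (hg A)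
  have hdB := h.abs_deriv_le hr (hg B)
  have hrA := abs_rpow_le_add_of_mem_uIcc hr hA
  have hrB := abs_rpow_le_add_of_mem_uIcc hr hB
  calc |(deriv g A + deriv g B) / 2| ≤ (|deriv g A| + |deriv g B|) / 2 := by
        rw [abs_div, abs_two]; gcongr; exact abs_add_le _ _
    _ ≤ L * (1 + |A| ^ r + |B| ^ r) := by linarith
    _ ≤ _ := mul_le_mul_of_nonneg_left (by linarith) h.nonneg

end PolyLipschitzWith

theorem uIcc_subset_Icc_min_max {α : Type*} [LinearOrder α] {x₁ x₂ x₃ x₄ a b : α}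
    (ha : a ∈ uIcc x₁ x₂) (hb : b ∈ uIcc x₃ x₄) :
    uIcc a b ⊆ Icc (min (min x₁ x₂) (min x₃ x₄)) (max (max x₁ x₂) (max x₃ x₄)) :=
  uIcc_subset_Icc ⟨(min_le_left _ _).trans ha.1, ha.2.trans (le_max_left _ _)⟩
    ⟨(min_le_right _ _).trans hb.1, hb.2.trans (le_max_right _ _)⟩

theorem stmt_11 (f : ℝ → ℝ) (Lf Lf' r : ℝ) (hr : 0 < r)
    (hf : ContDiff ℝ 1 f)
    (hLf : ∀ x y : ℝ, |f x - f y| ≤ Lf * (1 + |x| ^ r + |y| ^ r) * |x - y|)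
    (hLf' : ∀ x y : ℝ, |deriv f x - deriv f y| ≤ Lf' * (1 + |x| ^ r + |y| ^ r) * |x - y|)
    (x₁ x₂ x₃ x₄ : ℝ) :
    ∃ ξ ∈ Set.Icc (min (min x₁ x₂) (min x₃ x₄)) (max (max x₁ x₂) (max x₃ x₄)),
      ∃ R : ℝ,
        f x₁ - f x₂ - f x₃ + f x₄ = (x₁ - x₂ - x₃ + x₄) * deriv f ξ + R ∧
        |R| ≤ Lf' / 2 * (1 + |x₁| ^ r + |x₂| ^ r + |x₃| ^ r + |x₄| ^ r) *
                (|x₁ - x₂| + |x₃ - x₄|) * (|x₁ - x₃| + |x₂ - x₄|) ∧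
        |deriv f ξ| ≤ Lf * (1 + |x₁| ^ r + |x₂| ^ r + |x₃| ^ r + |x₄| ^ r) := by
  have hdf : Differentiable ℝ f := hf.differentiable one_ne_zero
  obtain ⟨t, ht, hmvt⟩ := exists_sub_sub_add_eq_deriv_lineMap hdf x₁ x₂ x₃ x₄
  set A := lineMap x₁ x₂ t
  set B := lineMap x₃ x₄ t
  have hA : A ∈ uIcc x₁ x₂ := lineMap_mem_uIcc x₁ x₂ (Ioo_subset_Icc_self ht)
  have hB : B ∈ uIcc x₃ x₄ := lineMap_mem_uIcc x₃ x₄ (Ioo_subset_Icc_self ht)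
  obtain ⟨ξ, hξ, hξA⟩ := exists_mem_uIcc_eq_add_div_two (hf.continuous_deriv le_rfl) A B
  refine ⟨ξ, uIcc_subset_Icc_min_max hA hB hξ,
    (x₁ - x₂ + (x₃ - x₄)) / 2 * (deriv f A - deriv f B), ?_, ?_, ?_⟩
  · rw [hmvt, hξA]; ring
  · calc _ = |x₁ - x₂ + (x₃ - x₄)| / 2 * |deriv f A - deriv f B| := by
          rw [abs_mul, abs_div, abs_two]
      _ ≤ (|x₁ - x₂| + |x₃ - x₄|) / 2 * (Lf' * (1 + |x₁| ^ r + |x₂| ^ r + |x₃| ^ r + |x₄| ^ r) *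
            (|x₁ - x₃| + |x₂ - x₄|)) := by
          gcongr
          · exact abs_add_le _ _
          · exact PolyLipschitzWith.abs_sub_lineMap_le hLf' hr.le x₁ x₂ x₃ x₄
              (Ioo_subset_Icc_self ht)
      _ = _ := by ring
  · exact hξA ▸ PolyLipschitzWith.abs_add_div_two_deriv_le hLf hr.le hdf hA hB
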